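/- arXiv:2006.14040 — 3 statements merged into one kernel-verified Lean document; each statement's English description precedes it below -/
import Mathlib

section
/- For v ∈ F_2^{2m} with E(v) ≠ ±I_N, the matrix G_v = (I_N ± iE(v))/√2 is unitary, and for every W in the Heisenberg–Weyl group: G_v W G_v† = W if W commutes with E(v), and G_v W G_v† = ∓ i W E(v) if W anticommutes with E(v). Consequently G_v is a Clifford matrix whose associated symplectic matrix is the symplectic transvection T_v = I_{2m} + Ω v^t v. -/
open Matrix
open scoped Classical

noncomputable section

abbrev V (m : ℕ) := Fin m → ZMod 2

/-- Integer dot product of two binary vectors (using {0,1} representatives). -/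
def dotN {m : ℕ} (a b : V m) : ℕ := ∑ i, (a i).val * (b i).val

/-- The matrix `D(a,b)` with `D(a,b)|v⟩ = (−1)^{b·v}|v⊕a⟩`. -/
def DM {m : ℕ} (a b : V m) : Matrix (V m) (V m) ℂ :=
  Matrix.of fun u v => if u = v + a then (-1 : ℂ) ^ dotN b v else 0

/-- The Hermitian Pauli `E(a,b) = i^{a·b mod 4} D(a,b)`, for `c = (a,b) ∈ F_2^{2m}`. -/
def EM {m : ℕ} (c : V m × V m) : Matrix (V m) (V m) ℂ :=
  Complex.I ^ dotN c.1 c.2 • DM c.1 c.2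

/-- The Heisenberg–Weyl group `HW_N = {i^k D(a,b)}`, as a set of matrices. -/
def HW (m : ℕ) : Set (Matrix (V m) (V m) ℂ) :=
  {M | ∃ (k : Fin 4) (a b : V m), M = Complex.I ^ (k : ℕ) • DM a b}

/-- A Clifford matrix: a unitary normalizing the Heisenberg–Weyl group. -/
def IsClifford {m : ℕ} (G : Matrix (V m) (V m) ℂ) : Prop :=
  G ∈ Matrix.unitaryGroup (V m) ℂ ∧ ∀ W ∈ HW m, G * W * Gᴴ ∈ HW m

/-- The (Pauli/Weyl) support of a matrix, identified with vectors in `F_2^{2m}`. -/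
def supp {m : ℕ} (M : Matrix (V m) (V m) ℂ) : Set (V m × V m) :=
  {c | Matrix.trace ((EM c)ᴴ * M) ≠ 0}

/-- The symplectic inner product on `F_2^{2m}`. -/
def sympl {m : ℕ} (u v : V m × V m) : ZMod 2 :=
  ∑ i, (u.1 i * v.2 i + u.2 i * v.1 i)

/-- The Clifford hierarchy; `CH m k` is the `(k+1)`-st level `C^(k+1)`, so
`CH m 0 = HW_N = C^(1)` and `C^(3) = CH m 2`. -/
def CH (m : ℕ) : ℕ → Set (Matrix (V m) (V m) ℂ)
  | 0 => HW m
  | k + 1 => {U | U ∈ Matrix.unitaryGroup (V m) ℂ ∧ ∀ W ∈ HW m, U * W * Uᴴ ∈ CH m k}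

/-!
For `E = E(v)` Hermitian with `E² = 1` and `u = ±i`, expanding `G W G†` with `G = (1 + uE)/√2`
gives `(W + u(EW - WE) + EWE)/2`, which is `W` when `W` commutes with `E` and `-u W E` when it
anticommutes. Two Paulis `E(c)`, `E(v)` commute or anticommute according to `⟨v, c⟩_s`; in the
anticommuting case `E(c) E(v) = z E(c + v)` with `z` a power of `i`, and squaring both sides gives
`z² = -1`, so the phase `-u z` of `G E(c) G†` is `±1`.
-/

lemma Complex.mul_self_eq_neg_one_iff {u : ℂ} : u * u = -1 ↔ u = Complex.I ∨ u = -Complex.I := by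
  rw [← Complex.I_mul_I, mul_self_eq_mul_self_iff]

lemma Complex.star_eq_neg_of_mul_self_eq_neg_one {u : ℂ} (hu : u * u = -1) : star u = -u := by
  rcases Complex.mul_self_eq_neg_one_iff.mp hu with rfl | rfl <;> simp

section TransvectionGate

variable {A : Type*} [Ring A] [StarRing A] [Algebra ℂ A] [StarModule ℂ A]

def transvectionGate (u : ℂ) (E : A) : A := ((Real.sqrt 2 : ℂ))⁻¹ • (1 + u • E)

variable {u : ℂ} {E : A}

lemma star_transvectionGate (hE : star E = E) (hu : u * u = -1) :
    star (transvectionGate u E) = transvectionGate (-u) E := by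
  simp only [transvectionGate, star_smul, star_add, star_one, hE,
    Complex.star_eq_neg_of_mul_self_eq_neg_one hu, star_inv₀, Complex.star_def, Complex.conj_ofReal]

lemma transvectionGate_mul_mul_star (hE : star E = E) (hu : u * u = -1) (W : A) :
    transvectionGate u E * W * star (transvectionGate u E)
      = (2 : ℂ)⁻¹ • (W + u • (E * W) - u • (W * E) + E * W * E) := by
  have hκ : ((Real.sqrt 2 : ℂ))⁻¹ * ((Real.sqrt 2 : ℂ))⁻¹ = 2⁻¹ := by
    rw [← mul_inv, ← Complex.ofReal_mul, Real.mul_self_sqrt zero_le_two, Complex.ofReal_ofNat]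
  rw [star_transvectionGate hE hu, transvectionGate, transvectionGate]
  simp only [smul_mul_assoc, mul_smul_comm, add_mul, mul_add, one_mul, mul_one, smul_add,
    smul_smul, mul_assoc]
  linear_combination (norm := module) hκ • (W + u • (E * W) - u • (W * E) + E * (W * E))
    - ((Real.sqrt 2 : ℂ)⁻¹ * (Real.sqrt 2 : ℂ)⁻¹ * hu) • (E * (W * E))

lemma transvectionGate_conj_of_commute (hE : star E = E) (hE2 : E * E = 1) (hu : u * u = -1)
    {W : A} (hW : W * E = E * W) :
    transvectionGate u E * W * star (transvectionGate u E) = W := by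
  have hEWE : E * W * E = W := by rw [← hW, mul_assoc, hE2, mul_one]
  rw [transvectionGate_mul_mul_star hE hu, hEWE, hW]
  module

lemma transvectionGate_conj_of_anticommute (hE : star E = E) (hE2 : E * E = 1)
    (hu : u * u = -1) {W : A} (hW : W * E = -(E * W)) :
    transvectionGate u E * W * star (transvectionGate u E) = -u • (W * E) := by
  have hEW : E * W = -(W * E) := by rw [hW, neg_neg]
  have hEWE : E * W * E = -W := by rw [hEW, neg_mul, mul_assoc, hE2, mul_one]
  rw [transvectionGate_mul_mul_star hE hu, hEWE, hEW]
  module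

lemma transvectionGate_mem_unitary (hE : star E = E) (hE2 : E * E = 1) (hu : u * u = -1) :
    transvectionGate u E ∈ unitary A := by
  have hu' : -u * -u = -1 := by rw [neg_mul_neg, hu]
  refine ⟨?_, ?_⟩
  -- `star G(u) = G(-u)`, so `star G(u) * G(u)` is the conjugate of `1` by `G(-u)`.
  · have h := transvectionGate_conj_of_commute hE hE2 hu' (W := 1) (by rw [one_mul, mul_one])
    rwa [mul_one, star_transvectionGate hE hu', neg_neg, ← star_transvectionGate hE hu] at h
  · simpa using transvectionGate_conj_of_commute hE hE2 hu (W := 1) (by rw [one_mul, mul_one])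

end TransvectionGate

lemma ZMod.two_eq_zero_or_eq_one (x : ZMod 2) : x = 0 ∨ x = 1 := by
  revert x
  decide

lemma neg_one_pow_congr_zmod_two {R : Type*} [Ring R] {n k : ℕ}
    (h : (n : ZMod 2) = k) : (-1 : R) ^ n = (-1) ^ k := by
  rw [neg_one_pow_eq_pow_mod_two, neg_one_pow_eq_pow_mod_two (n := k),
    (ZMod.natCast_eq_natCast_iff' n k 2).mp h]

section Pauli

variable {m : ℕ}

lemma V.add_self_eq_zero (a : V m) : a + a = 0 := by
  ext i
  exact CharTwo.add_self_eq_zero (a i)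

lemma V.add_add_cancel_right (x a : V m) : x + a + a = x := by
  rw [add_assoc, V.add_self_eq_zero, add_zero]

lemma dotN_comm (a b : V m) : dotN a b = dotN b a := by
  simp only [dotN, mul_comm]

lemma natCast_dotN (a b : V m) : (dotN a b : ZMod 2) = a ⬝ᵥ b := by
  simp [dotN, dotProduct, ZMod.natCast_val]

lemma neg_one_pow_dotN_add_left (a a' b : V m) :
    (-1 : ℂ) ^ dotN (a + a') b = (-1) ^ dotN a b * (-1) ^ dotN a' b := by
  rw [← pow_add]
  exact neg_one_pow_congr_zmod_two (by push_cast; simp only [natCast_dotN, add_dotProduct])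

lemma neg_one_pow_dotN_add_right (a b b' : V m) :
    (-1 : ℂ) ^ dotN a (b + b') = (-1) ^ dotN a b * (-1) ^ dotN a b' := by
  rw [← pow_add]
  exact neg_one_pow_congr_zmod_two (by push_cast; simp only [natCast_dotN, dotProduct_add])

lemma DM_mul (a b a' b' : V m) :
    DM a b * DM a' b' = (-1 : ℂ) ^ dotN b a' • DM (a + a') (b + b') := by
  ext u w
  simp only [mul_apply, DM, of_apply, Matrix.smul_apply, smul_eq_mul, mul_ite, ite_mul, mul_zero,
    zero_mul]
  rw [Finset.sum_eq_single (w + a') (fun x _ hx => by simp [hx]) (by simp), if_pos rfl,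
    ← add_assoc, neg_one_pow_dotN_add_right, neg_one_pow_dotN_add_left]
  by_cases h : u = w + a' + a
  · rw [if_pos h, if_pos (h.trans (add_right_comm _ _ _))]; ring
  · rw [if_neg h, if_neg (fun h' => h (h'.trans (add_right_comm _ _ _)))]

lemma DM_zero : DM (0 : V m) 0 = 1 := by
  ext u w
  simp [DM, dotN, one_apply]

lemma DM_conjTranspose (a b : V m) : (DM a b)ᴴ = (-1 : ℂ) ^ dotN a b • DM a b := by
  ext u w
  simp only [conjTranspose_apply, DM, of_apply, Matrix.smul_apply, smul_eq_mul, mul_ite, mul_zero]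
  by_cases h : u = w + a
  · rw [if_pos (by rw [h, V.add_add_cancel_right]), if_pos h, h, star_pow, star_neg, star_one,
      neg_one_pow_dotN_add_right, dotN_comm b a, mul_comm]
  · rw [if_neg (fun h' => h (by rw [h', V.add_add_cancel_right])), if_neg h, star_zero]

lemma EM_conjTranspose (c : V m × V m) : (EM c)ᴴ = EM c := by
  rw [EM, conjTranspose_smul, DM_conjTranspose, smul_smul, star_pow, Complex.star_def,
    Complex.conj_I, ← mul_pow, neg_mul_neg, mul_one]

lemma EM_mul_EM (c d : V m × V m) :
    EM c * EM d = (Complex.I ^ (dotN c.1 c.2 + dotN d.1 d.2) * (-1) ^ dotN c.2 d.1) •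
      DM (c.1 + d.1) (c.2 + d.2) := by
  rw [EM, EM, smul_mul_smul_comm, DM_mul, smul_smul, pow_add]

lemma EM_mul_self (c : V m × V m) : EM c * EM c = 1 := by
  rw [EM_mul_EM, V.add_self_eq_zero, V.add_self_eq_zero, DM_zero, dotN_comm c.2,
    ← two_mul, pow_mul, Complex.I_sq, ← pow_add, ← two_mul, pow_mul, neg_one_sq, one_pow, one_smul]

lemma sympl_eq_dotProduct (u w : V m × V m) : sympl u w = u.1 ⬝ᵥ w.2 + u.2 ⬝ᵥ w.1 := by
  simp only [sympl, dotProduct, Finset.sum_add_distrib]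

lemma EM_mul_EM_comm (c d : V m × V m) :
    EM c * EM d = (-1 : ℂ) ^ (sympl d c).val • (EM d * EM c) := by
  have hsign : (-1 : ℂ) ^ dotN c.2 d.1 = (-1) ^ (sympl d c).val * (-1) ^ dotN d.2 c.1 := by
    rw [← pow_add]
    refine neg_one_pow_congr_zmod_two ?_
    rw [Nat.cast_add, ZMod.natCast_zmod_val, sympl_eq_dotProduct, natCast_dotN, natCast_dotN,
      add_assoc, CharTwo.add_self_eq_zero, add_zero, dotProduct_comm]
  rw [EM_mul_EM, EM_mul_EM, smul_smul, add_comm d.1, add_comm d.2, add_comm (dotN d.1 d.2), hsign]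
  congr 1
  ring

lemma EM_commute_of_sympl_eq_zero {c d : V m × V m} (h : sympl d c = 0) :
    EM c * EM d = EM d * EM c := by
  rw [EM_mul_EM_comm, h, ZMod.val_zero, pow_zero, one_smul]

lemma EM_anticommute_of_sympl_eq_one {c d : V m × V m} (h : sympl d c = 1) :
    EM c * EM d = -(EM d * EM c) := by
  rw [EM_mul_EM_comm, h, ZMod.val_one, pow_one, neg_one_smul]

lemma DM_eq_I_pow_smul_EM (a b : V m) : DM a b = Complex.I ^ (3 * dotN a b) • EM (a, b) := by
  rw [EM, smul_smul, ← pow_add, show 3 * dotN a b + dotN a b = 4 * dotN a b by ring, pow_mul,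
    Complex.I_pow_four, one_pow, one_smul]

lemma exists_EM_mul_EM_eq_I_pow_smul (c d : V m × V m) :
    ∃ t : ℕ, EM c * EM d = Complex.I ^ t • EM (c + d) := by
  refine ⟨dotN c.1 c.2 + dotN d.1 d.2 + 2 * dotN c.2 d.1 + 3 * dotN (c + d).1 (c + d).2, ?_⟩
  rw [EM_mul_EM, DM_eq_I_pow_smul_EM, smul_smul, ← Complex.I_sq, ← pow_mul, ← pow_add, ← pow_add]
  rfl

lemma EM_mul_EM_eq_of_sympl_eq_one {c d : V m × V m} (h : sympl d c = 1) :
    ∃ z : ℂ, z * z = -1 ∧ EM c * EM d = z • EM (c + d) := by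
  obtain ⟨t, ht⟩ := exists_EM_mul_EM_eq_I_pow_smul c d
  refine ⟨Complex.I ^ t, ?_, ht⟩
  have hanti : EM d * EM c = -(EM c * EM d) := by
    rw [EM_anticommute_of_sympl_eq_one h, neg_neg]
  have hsq : (Complex.I ^ t * Complex.I ^ t) • (1 : Matrix (V m) (V m) ℂ) = (-1 : ℂ) • 1 := by
    calc (Complex.I ^ t * Complex.I ^ t) • (1 : Matrix (V m) (V m) ℂ)
        = (EM c * EM d) * (EM c * EM d) := by rw [ht, smul_mul_smul_comm, EM_mul_self]
      _ = EM c * (EM d * EM c) * EM d := by simp only [mul_assoc]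
      _ = -((EM c * EM c) * (EM d * EM d)) := by rw [hanti]; noncomm_ring
      _ = (-1 : ℂ) • 1 := by rw [EM_mul_self, EM_mul_self, one_mul, neg_one_smul]
  exact smul_left_injective ℂ one_ne_zero hsq

lemma mem_HW_iff {W : Matrix (V m) (V m) ℂ} :
    W ∈ HW m ↔ ∃ (t : ℕ) (c : V m × V m), W = Complex.I ^ t • EM c := by
  constructor
  · rintro ⟨k, a, b, rfl⟩
    exact ⟨k + 3 * dotN a b, (a, b), by rw [DM_eq_I_pow_smul_EM, smul_smul, pow_add]⟩
  · rintro ⟨t, c, rfl⟩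
    refine ⟨⟨(t + dotN c.1 c.2) % 4, Nat.mod_lt _ four_pos⟩, c.1, c.2, ?_⟩
    rw [EM, smul_smul, ← pow_add, Complex.I_pow_eq_pow_mod]

lemma I_pow_smul_mem_HW {W : Matrix (V m) (V m) ℂ} (j : ℕ) (hW : W ∈ HW m) :
    Complex.I ^ j • W ∈ HW m := by
  obtain ⟨t, c, rfl⟩ := mem_HW_iff.mp hW
  exact mem_HW_iff.mpr ⟨j + t, c, by rw [smul_smul, pow_add]⟩

lemma mul_EM_mem_HW {W : Matrix (V m) (V m) ℂ} (hW : W ∈ HW m) (v : V m × V m) :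
    W * EM v ∈ HW m := by
  obtain ⟨t, c, rfl⟩ := mem_HW_iff.mp hW
  obtain ⟨s, hs⟩ := exists_EM_mul_EM_eq_I_pow_smul c v
  exact mem_HW_iff.mpr ⟨t + s, c + v, by rw [smul_mul_assoc, hs, smul_smul, pow_add]⟩

lemma commute_or_anticommute_of_mem_HW {W : Matrix (V m) (V m) ℂ} (hW : W ∈ HW m)
    (v : V m × V m) : W * EM v = EM v * W ∨ W * EM v = -(EM v * W) := by
  obtain ⟨t, c, rfl⟩ := mem_HW_iff.mp hW
  rw [smul_mul_assoc, mul_smul_comm]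
  rcases ZMod.two_eq_zero_or_eq_one (sympl v c) with h | h
  · left; rw [EM_commute_of_sympl_eq_zero h]
  · right; rw [EM_anticommute_of_sympl_eq_one h, smul_neg]

end Pauli

section PauliTransvection

variable {m : ℕ} {u : ℂ}

lemma transvectionGate_EM_conj_mem_HW (hu : u * u = -1) (v : V m × V m)
    {W : Matrix (V m) (V m) ℂ} (hW : W ∈ HW m) :
    transvectionGate u (EM v) * W * star (transvectionGate u (EM v)) ∈ HW m := by
  rcases commute_or_anticommute_of_mem_HW hW v with hc | ha
  · rwa [transvectionGate_conj_of_commute (EM_conjTranspose v) (EM_mul_self v) hu hc]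
  · rw [transvectionGate_conj_of_anticommute (EM_conjTranspose v) (EM_mul_self v) hu ha]
    have hneg : ∃ j : ℕ, -u = Complex.I ^ j := by
      rcases Complex.mul_self_eq_neg_one_iff.mp hu with rfl | rfl
      · exact ⟨3, by rw [Complex.I_pow_three]⟩
      · exact ⟨1, by rw [neg_neg, pow_one]⟩
    obtain ⟨j, hj⟩ := hneg
    rw [hj]
    exact I_pow_smul_mem_HW j (mul_EM_mem_HW hW v)

lemma transvectionGate_EM_conj_EM (hu : u * u = -1) (v c : V m × V m) :
    ∃ s : ℂ, (s = 1 ∨ s = -1) ∧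
      transvectionGate u (EM v) * EM c * star (transvectionGate u (EM v))
        = s • EM (c + sympl v c • v) := by
  rcases ZMod.two_eq_zero_or_eq_one (sympl v c) with h | h
  · refine ⟨1, Or.inl rfl, ?_⟩
    rw [h, zero_smul, add_zero, one_smul]
    exact transvectionGate_conj_of_commute (EM_conjTranspose v) (EM_mul_self v) hu
      (EM_commute_of_sympl_eq_zero h)
  · obtain ⟨z, hz, hcv⟩ := EM_mul_EM_eq_of_sympl_eq_one h
    refine ⟨-u * z, mul_self_eq_one_iff.mp (by linear_combination u * u * hz - hu), ?_⟩
    rw [transvectionGate_conj_of_anticommute (EM_conjTranspose v) (EM_mul_self v) hu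
      (EM_anticommute_of_sympl_eq_one h), hcv, h, one_smul, smul_smul]

end PauliTransvection

theorem stmt2_general {m : ℕ} (v : V m × V m)
    (ε : ℂ) (hε : ε = 1 ∨ ε = -1) :
    ∀ G : Matrix (V m) (V m) ℂ,
      G = ((Real.sqrt 2 : ℂ))⁻¹ • ((1 : Matrix (V m) (V m) ℂ) + (ε * Complex.I) • EM v) →
      G ∈ Matrix.unitaryGroup (V m) ℂ ∧
      (∀ W ∈ HW m,
        (W * EM v = EM v * W → G * W * Gᴴ = W) ∧
        (W * EM v = -(EM v * W) → G * W * Gᴴ = (-(ε * Complex.I)) • (W * EM v))) ∧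
      IsClifford G ∧
      (∀ c : V m × V m, ∃ s : ℂ, (s = 1 ∨ s = -1) ∧
        G * EM c * Gᴴ = s • EM (c + sympl v c • v)) := by
  rintro G rfl
  have hu : ε * Complex.I * (ε * Complex.I) = -1 := by rcases hε with rfl | rfl <;> simp
  have hunit := transvectionGate_mem_unitary (EM_conjTranspose v) (EM_mul_self v) hu
  exact ⟨hunit,
    fun W _ => ⟨transvectionGate_conj_of_commute (EM_conjTranspose v) (EM_mul_self v) hu,
      transvectionGate_conj_of_anticommute (EM_conjTranspose v) (EM_mul_self v) hu⟩,
    ⟨hunit, fun W hW => transvectionGate_EM_conj_mem_HW hu v hW⟩,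
    transvectionGate_EM_conj_EM hu v⟩

/-- for `v` with `E(v) ≠ ±I`, the matrix `G_v = (I ± iE(v))/√2` is unitary;
it fixes every `W ∈ HW_N` commuting with `E(v)` and maps an anticommuting `W` to
`∓ i W E(v)`; consequently `G_v` is Clifford with associated symplectic matrix the
transvection `T_v : c ↦ c + ⟨v,c⟩_s v`. -/
theorem stmt2 {m : ℕ} (hm : 1 ≤ m) (v : V m × V m)
    (hv : EM (m := m) v ≠ 1 ∧ EM (m := m) v ≠ -1)
    (ε : ℂ) (hε : ε = 1 ∨ ε = -1) :
    ∀ G : Matrix (V m) (V m) ℂ,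
      G = ((Real.sqrt 2 : ℂ))⁻¹ • ((1 : Matrix (V m) (V m) ℂ) + (ε * Complex.I) • EM v) →
      G ∈ Matrix.unitaryGroup (V m) ℂ ∧
      (∀ W ∈ HW m,
        (W * EM v = EM v * W → G * W * Gᴴ = W) ∧
        (W * EM v = -(EM v * W) → G * W * Gᴴ = (-(ε * Complex.I)) • (W * EM v))) ∧
      IsClifford G ∧
      (∀ c : V m × V m, ∃ s : ℂ, (s = 1 ∨ s = -1) ∧
        G * EM c * Gᴴ = s • EM (c + sympl v c • v)) :=
  stmt2_general v ε hε
end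
end

section
/- For any Clifford matrix G, the support of G is contained in the symplectic dual of C_G, where C_G = {c ∈ F_2^{2m} : G E(c) G† = E(c)} is the set of Paulis commuting with G; that is, if c ∈ F_2^{2m} satisfies Tr(G E(c)) ≠ 0, then ⟨c, v⟩_s = 0 for all v ∈ C_G. -/
open Matrix
open scoped Classical

noncomputable section

/-!
A Pauli matrix `E(v)` fixed by conjugation with the unitary `G` commutes with `G`. If
`⟨c, v⟩_s = 1`, then `E(v)` anticommutes with `E(c)`, so conjugating `G E(c)` by the involution
`E(v)` negates it; as the trace is invariant under conjugation, `Tr(G E(c)) = -Tr(G E(c)) = 0`.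
-/

section Trace

variable {n R : Type*} [Fintype n] [DecidableEq n] [CommRing R]

lemma trace_mul_eq_neg_of_anticommute {G E W : Matrix n n R} (hW : W * W = 1)
    (hGW : Commute G W) (hWE : W * E = -(E * W)) : trace (G * E) = -trace (G * E) := by
  have hconj : W * (G * E) * W = -(G * E) := by
    rw [← mul_assoc, ← hGW.eq, mul_assoc G, hWE, mul_neg, neg_mul, mul_assoc, mul_assoc, hW,
      mul_one]
  calc trace (G * E) = trace (W * (G * E) * W) := by
        rw [trace_mul_cycle, hW, one_mul]
    _ = -trace (G * E) := by rw [hconj, trace_neg]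

end Trace

lemma neg_one_pow_eq_of_natCast_eq {R : Type*} [Monoid R] [HasDistribNeg R] {n k : ℕ}
    (h : (n : ZMod 2) = k) : (-1 : R) ^ n = (-1) ^ k :=
  neg_one_pow_congr <| by rw [← ZMod.natCast_eq_zero_iff_even, ← ZMod.natCast_eq_zero_iff_even, h]

namespace Pauli

variable {m : ℕ}

def dot (a b : V m) : ZMod 2 := ∑ i, a i * b i

lemma natCast_dotN (a b : V m) : (dotN a b : ZMod 2) = dot a b := by
  simp [dotN, dot, ZMod.natCast_val, ZMod.cast_id]

lemma dot_comm (a b : V m) : dot a b = dot b a := by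
  simp [dot, mul_comm]

lemma dot_add_left (a b c : V m) : dot (a + b) c = dot a c + dot b c := by
  simp [dot, add_mul, Finset.sum_add_distrib]

lemma dot_add_right (a b c : V m) : dot a (b + c) = dot a b + dot a c := by
  simp [dot, mul_add, Finset.sum_add_distrib]

lemma sympl_eq_dot (u v : V m × V m) : sympl u v = dot u.1 v.2 + dot u.2 v.1 := by
  simp [sympl, dot, Finset.sum_add_distrib]

lemma DM_mul (a b c d : V m) :
    DM a b * DM c d = (-1 : ℂ) ^ dotN b c • DM (a + c) (b + d) := by
  ext u w
  simp only [DM, mul_apply, Matrix.smul_apply, of_apply, mul_ite, mul_zero, ite_mul, zero_mul,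
    smul_eq_mul, Finset.sum_ite_eq', Finset.mem_univ, if_true]
  have hcond : u = w + c + a ↔ u = w + (a + c) := by rw [add_comm a, add_assoc]
  by_cases h : u = w + c + a
  · rw [if_pos h, if_pos (hcond.mp h), ← pow_add, ← pow_add]
    apply neg_one_pow_eq_of_natCast_eq
    push_cast [natCast_dotN]
    rw [dot_add_right, dot_add_left]
    ring
  · rw [if_neg h, if_neg (mt hcond.mpr h)]

lemma DM_mul_comm (c v : V m × V m) :
    DM v.1 v.2 * DM c.1 c.2 = (-1 : ℂ) ^ (sympl c v).val • (DM c.1 c.2 * DM v.1 v.2) := by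
  rw [DM_mul, DM_mul, smul_smul, ← pow_add, add_comm v.1, add_comm v.2]
  congr 1
  apply neg_one_pow_eq_of_natCast_eq
  push_cast [natCast_dotN, ZMod.natCast_val, ZMod.cast_id]
  rw [sympl_eq_dot, dot_comm v.2, add_assoc, CharTwo.add_self_eq_zero, add_zero]

lemma EM_mul_comm (c v : V m × V m) :
    EM v * EM c = (-1 : ℂ) ^ (sympl c v).val • (EM c * EM v) := by
  simp only [EM, smul_mul_smul_comm, DM_mul_comm c v, smul_smul, mul_comm]

lemma DM_zero_zero : DM (0 : V m) 0 = 1 := by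
  ext u w
  simp [DM, one_apply, dotN]

lemma EM_mul_self (c : V m × V m) : EM c * EM c = 1 := by
  have hsq : ∀ a : V m, a + a = 0 := fun a => funext fun i => CharTwo.add_self_eq_zero (a i)
  rw [EM, smul_mul_smul_comm, DM_mul, hsq, hsq, DM_zero_zero, smul_smul, ← mul_pow,
    Complex.I_mul_I, ← pow_add, neg_one_pow_eq_of_natCast_eq (k := 0), pow_zero, one_smul]
  push_cast [natCast_dotN]
  rw [dot_comm c.2, CharTwo.add_self_eq_zero]

end Pauli

theorem stmt3_general {m : ℕ} (G : Matrix (V m) (V m) ℂ) (hG : IsClifford G)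
    (c : V m × V m) (hc : Matrix.trace (G * EM c) ≠ 0) :
    ∀ v : V m × V m, G * EM v * Gᴴ = EM v → sympl c v = 0 := by
  intro v hv
  have hGv : Commute G (EM v) := (commute_unitary_iff_star_right_conjugate hG.1).2 hv
  by_contra hcv
  replace hcv : sympl c v = 1 := Fin.eq_one_of_ne_zero _ hcv
  have hanti : EM v * EM c = -(EM c * EM v) := by
    rw [Pauli.EM_mul_comm, hcv, ZMod.val_one, pow_one, neg_one_smul]
  exact hc (CharZero.eq_neg_self_iff.mp
    (trace_mul_eq_neg_of_anticommute (Pauli.EM_mul_self v) hGv hanti))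

/-- for a Clifford `G`, `supp(G) ⊆ C_G^{⊥s}`, where
`C_G = {v : G E(v) G† = E(v)}`: if `Tr(G E(c)) ≠ 0` then `⟨c,v⟩_s = 0` for all `v ∈ C_G`. -/
theorem stmt3 {m : ℕ} (hm : 1 ≤ m) (G : Matrix (V m) (V m) ℂ) (hG : IsClifford G)
    (c : V m × V m) (hc : Matrix.trace (G * EM c) ≠ 0) :
    ∀ v : V m × V m, G * EM v * Gᴴ = EM v → sympl c v = 0 :=
  stmt3_general G hG c hc
end
end

section
/- Let S be a symmetric m×m binary matrix and G_U(S) = diag(i^{vSv^t mod 4})_{v ∈ F_2^m} (the quadratic form vSv^t computed over the integers from a binary representative, reduced mod 4). Let W = ker(S) = {w ∈ F_2^m : wS = 0}. If Tr(G_U(S)) ≠ 0 then supp(G_U(S)) = {0} × W^⊥; otherwise there exists c ∈ F_2^m such that supp(G_U(S)) = {0} × (c ⊕ W^⊥). In particular the support of a diagonal Clifford matrix is determined by the row space of its associated symmetric matrix S. -/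
/-!
Write `χ_b(v) = (-1)^{b·v} i^{q(v)}` with `q(v) = vSv^t`. The coefficient of `G_U(S)` at
`E(a,b)` vanishes unless `a = 0`, and is then `f(b) = ∑_v χ_b(v)`. Lifting coordinates to `ℤ/4`
shows `i^{q(u+v)} = i^{q(u)} i^{q(v)} (-1)^{uSv^t}` for symmetric `S`. Hence on `W = ker S` the map
`w ↦ i^{q(w)}` is a `±1`-valued character, equal to `(-1)^{c·w}` for some `c`, and translating the
sum by `w ∈ W` gives `f(b) = χ_b(w) f(b)`: if `f(b) ≠ 0` then `χ_b` is trivial on `W`, i.e.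
`b + c ∈ W^⊥`. Conversely `|f(b)|² = 2^m ∑_{w ∈ W} χ_b(w)`, which is `2^m |W| ≠ 0` when `χ_b` is
trivial on `W`. If `Tr G_U(S) = f(0) ≠ 0`, the character `i^q` is already trivial on `W`, so `c = 0`.
-/

open Matrix
open scoped Classical

noncomputable section

/-- The permutation matrix `G_D(P) : |v⟩ ↦ |vP⟩`. -/
def GD {m : ℕ} (P : Matrix (Fin m) (Fin m) (ZMod 2)) : Matrix (V m) (V m) ℂ :=
  Matrix.of fun u v => if u = Matrix.vecMul v P then 1 else 0

/-- `Fix(P) = {v : vP = v}`. -/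
def FixS {m : ℕ} (P : Matrix (Fin m) (Fin m) (ZMod 2)) : Set (V m) :=
  {v | Matrix.vecMul v P = v}

/-- `Res(P) = rowspace(I ⊕ P) = {v ⊕ vP : v ∈ F_2^m}`. -/
def ResS {m : ℕ} (P : Matrix (Fin m) (Fin m) (ZMod 2)) : Set (V m) :=
  {w | ∃ v : V m, w = v + Matrix.vecMul v P}

/-- Euclidean dual with respect to the standard bilinear form on `F_2^m`. -/
def perp {m : ℕ} (A : Set (V m)) : Set (V m) :=
  {w | ∀ v ∈ A, ∑ i, w i * v i = 0}

/-- The quadratic form `vSv^t` computed over the integers from `{0,1}` representatives. -/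
def quadN {m : ℕ} (S : Matrix (Fin m) (Fin m) (ZMod 2)) (v : V m) : ℕ :=
  ∑ i, ∑ j, (v i).val * (S i j).val * (v j).val

/-- The diagonal Clifford `G_U(S) = diag(i^{vSv^t mod 4})`. -/
def GU {m : ℕ} (S : Matrix (Fin m) (Fin m) (ZMod 2)) : Matrix (V m) (V m) ℂ :=
  Matrix.diagonal fun v => Complex.I ^ quadN S v

namespace DiagonalClifford

variable {m : ℕ} {S : Matrix (Fin m) (Fin m) (ZMod 2)}

def signChar (x : ZMod 2) : ℂ := (-1) ^ x.val

lemma zmod_two_eq_zero_or_one (x : ZMod 2) : x = 0 ∨ x = 1 := by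
  revert x; decide

@[simp] lemma signChar_zero : signChar 0 = 1 := rfl

@[simp] lemma signChar_one : signChar 1 = -1 := by simp [signChar, ZMod.val_one]

lemma signChar_natCast (n : ℕ) : signChar n = (-1) ^ n := by
  rw [signChar, ZMod.val_natCast, ← neg_one_pow_eq_pow_mod_two]

lemma signChar_add (x y : ZMod 2) : signChar (x + y) = signChar x * signChar y := by
  rw [signChar, ZMod.val_add, ← neg_one_pow_eq_pow_mod_two, pow_add, signChar, signChar]

lemma signChar_mul_self (x : ZMod 2) : signChar x * signChar x = 1 := by
  rw [← signChar_add, CharTwo.add_self_eq_zero, signChar_zero]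

lemma signChar_eq_one_iff {x : ZMod 2} : signChar x = 1 ↔ x = 0 := by
  rcases zmod_two_eq_zero_or_one x with rfl | rfl <;> norm_num

lemma signChar_injective : Function.Injective signChar := by
  intro x y h
  rw [← CharTwo.add_eq_zero, ← signChar_eq_one_iff, signChar_add, h, signChar_mul_self]

lemma exists_signChar_eq {z : ℂ} (hz : z ^ 2 = 1) : ∃ x, signChar x = z := by
  rcases sq_eq_one_iff.mp hz with rfl | rfl
  exacts [⟨0, signChar_zero⟩, ⟨1, signChar_one⟩]

@[simp] lemma conj_signChar (x : ZMod 2) : starRingEnd ℂ (signChar x) = signChar x := by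
  simp [signChar]

lemma add_self_eq_zero_vec (v : V m) : v + v = 0 :=
  funext fun i => CharTwo.add_self_eq_zero (v i)

lemma natCast_dotN (a b : V m) : (dotN a b : ZMod 2) = a ⬝ᵥ b := by
  simp [dotN, dotProduct]

lemma sum_signChar_dotProduct (c : V m) :
    ∑ v : V m, signChar (c ⬝ᵥ v) = if c = 0 then 2 ^ m else 0 := by
  split_ifs with hc
  · simp [hc]
  obtain ⟨i, hi⟩ := Function.ne_iff.mp hc
  have hci : c ⬝ᵥ Pi.single i 1 = 1 := by
    rw [dotProduct_single, mul_one]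
    exact (zmod_two_eq_zero_or_one _).resolve_left hi
  have hneg : ∑ v : V m, signChar (c ⬝ᵥ v) = -∑ v : V m, signChar (c ⬝ᵥ v) := by
    conv_lhs => rw [← Equiv.sum_comp (Equiv.addRight (Pi.single i 1 : V m))]
    rw [← Finset.sum_neg_distrib]
    simp only [Equiv.coe_addRight, dotProduct_add, signChar_add, hci, signChar_one, mul_neg_one]
  exact self_eq_neg.mp hneg

lemma _root_.Matrix.IsSymm.dotProduct_mulVec_add {R n : Type*} [CommRing R] [Fintype n]
    {T : Matrix n n R} (hT : T.IsSymm) (x y : n → R) :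
    (x + y) ⬝ᵥ T *ᵥ (x + y) = x ⬝ᵥ T *ᵥ x + y ⬝ᵥ T *ᵥ y + 2 * (x ⬝ᵥ T *ᵥ y) := by
  have hyx : y ⬝ᵥ T *ᵥ x = x ⬝ᵥ T *ᵥ y := by
    rw [dotProduct_mulVec, ← mulVec_transpose, hT.eq, dotProduct_comm]
  simp only [mulVec_add, dotProduct_add, add_dotProduct, hyx]
  ring

def bilN (S : Matrix (Fin m) (Fin m) (ZMod 2)) (u v : V m) : ℕ :=
  ∑ i, ∑ j, (u i).val * (S i j).val * (v j).val

def liftZMod4 (v : V m) : Fin m → ZMod 4 := fun i => ((v i).val : ZMod 4)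

lemma natCast_bilN_eq_zmod4 (u v : V m) :
    (bilN S u v : ZMod 4) =
      liftZMod4 u ⬝ᵥ S.map (fun x => (x.val : ZMod 4)) *ᵥ liftZMod4 v := by
  simp [bilN, liftZMod4, dotProduct, mulVec, Finset.mul_sum, mul_assoc]

lemma natCast_bilN_eq_zmod2 (u v : V m) :
    (bilN S u v : ZMod 2) = (u ᵥ* S) ⬝ᵥ v := by
  simp only [bilN, Nat.cast_sum, Nat.cast_mul, ZMod.natCast_val, ZMod.cast_id', id_eq, dotProduct,
    vecMul, Finset.sum_mul]
  exact Finset.sum_comm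

lemma liftZMod4_add (u v : V m) :
    liftZMod4 (u + v) = liftZMod4 u + liftZMod4 v + 2 • (liftZMod4 u * liftZMod4 v) := by
  funext i
  simp only [liftZMod4, Pi.add_apply, Pi.smul_apply, Pi.mul_apply]
  generalize u i = x; generalize v i = y
  revert x y; decide

-- The carry term `2xy` of `liftZMod4_add` changes the quadratic form only by multiples of `4`.
lemma natCast_quadN_add (hS : S.IsSymm) (u v : V m) :
    (quadN S (u + v) : ZMod 4) = quadN S u + quadN S v + 2 * bilN S u v := by
  have hT : (S.map fun x => (x.val : ZMod 4)).IsSymm := by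
    rw [Matrix.IsSymm, ← Matrix.transpose_map, hS.eq]
  have h4 : (4 : ZMod 4) = 0 := rfl
  change (bilN S (u + v) (u + v) : ZMod 4) = bilN S u u + bilN S v v + 2 * bilN S u v
  simp only [natCast_bilN_eq_zmod4]
  set T := S.map fun x => (x.val : ZMod 4)
  set x := liftZMod4 u
  set y := liftZMod4 v
  rw [liftZMod4_add, hT.dotProduct_mulVec_add, hT.dotProduct_mulVec_add]
  simp only [mulVec_smul, dotProduct_smul, smul_dotProduct]
  linear_combination ((x * y) ⬝ᵥ T *ᵥ (x * y) + (x + y) ⬝ᵥ T *ᵥ (x * y)) * h4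

def phase (S : Matrix (Fin m) (Fin m) (ZMod 2)) (v : V m) : ℂ := Complex.I ^ quadN S v

lemma phase_add (hS : S.IsSymm) (u v : V m) :
    phase S (u + v) = phase S u * phase S v * signChar ((u ᵥ* S) ⬝ᵥ v) := by
  have h : (quadN S (u + v) : ZMod 4) = ((quadN S u + quadN S v + 2 * bilN S u v : ℕ) : ZMod 4) := by
    push_cast
    exact natCast_quadN_add hS u v
  rw [ZMod.natCast_eq_natCast_iff'] at h
  rw [phase, Complex.I_pow_eq_pow_mod, h, ← Complex.I_pow_eq_pow_mod, pow_add, pow_add, pow_mul,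
    Complex.I_sq, ← signChar_natCast, natCast_bilN_eq_zmod2, phase, phase]

@[simp] lemma phase_zero : phase S 0 = 1 := by
  simp [phase, quadN]

lemma phase_mul_conj (v : V m) :
    phase S v * starRingEnd ℂ (phase S v) = 1 := by
  rw [phase, map_pow, Complex.conj_I, ← mul_pow, mul_neg, Complex.I_mul_I, neg_neg, one_pow]

def twistedPhase (S : Matrix (Fin m) (Fin m) (ZMod 2)) (b v : V m) : ℂ :=
  signChar (b ⬝ᵥ v) * phase S v

lemma twistedPhase_add (hS : S.IsSymm) (b u v : V m) :
    twistedPhase S b (u + v) =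
      twistedPhase S b u * twistedPhase S b v * signChar ((u ᵥ* S) ⬝ᵥ v) := by
  simp only [twistedPhase, dotProduct_add, signChar_add, phase_add hS]
  ring

lemma twistedPhase_mul_conj (b v : V m) :
    twistedPhase S b v * starRingEnd ℂ (twistedPhase S b v) = 1 := by
  rw [twistedPhase, map_mul, conj_signChar,
    mul_mul_mul_comm, ← mul_assoc, signChar_mul_self, one_mul, phase_mul_conj]

def weylCoeff (S : Matrix (Fin m) (Fin m) (ZMod 2)) (b : V m) : ℂ := ∑ v, twistedPhase S b v

lemma weylCoeff_eq_mul_of_vecMul_eq_zero (hS : S.IsSymm)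
    (b : V m) {w : V m} (hw : w ᵥ* S = 0) :
    weylCoeff S b = twistedPhase S b w * weylCoeff S b := by
  conv_lhs => rw [weylCoeff, ← Equiv.sum_comp (Equiv.addLeft w)]
  simp [weylCoeff, Finset.mul_sum, twistedPhase_add hS, hw]

lemma weylCoeff_mul_conj (hS : S.IsSymm) (b : V m) :
    weylCoeff S b * starRingEnd ℂ (weylCoeff S b) =
      2 ^ m * ∑ w, if w ᵥ* S = 0 then twistedPhase S b w else 0 := by
  calc weylCoeff S b * starRingEnd ℂ (weylCoeff S b)
      = ∑ v, ∑ u, twistedPhase S b u * starRingEnd ℂ (twistedPhase S b v) := by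
        rw [weylCoeff, map_sum, Finset.sum_mul_sum, Finset.sum_comm]
    _ = ∑ v, ∑ w, twistedPhase S b (w + v) * starRingEnd ℂ (twistedPhase S b v) := by
        refine Finset.sum_congr rfl fun v _ => ?_
        exact (Equiv.sum_comp (Equiv.addRight v) _).symm
    _ = ∑ w, twistedPhase S b w * ∑ v, signChar ((w ᵥ* S) ⬝ᵥ v) := by
        rw [Finset.sum_comm]
        refine Finset.sum_congr rfl fun w _ => ?_
        rw [Finset.mul_sum]
        refine Finset.sum_congr rfl fun v _ => ?_
        rw [twistedPhase_add hS, mul_right_comm, mul_assoc _ (twistedPhase S b v),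
          twistedPhase_mul_conj, mul_one]
    _ = 2 ^ m * ∑ w, if w ᵥ* S = 0 then twistedPhase S b w else 0 := by
        simp only [sum_signChar_dotProduct, mul_ite, mul_zero, Finset.mul_sum]
        refine Finset.sum_congr rfl fun w _ => ?_
        split_ifs <;> ring

lemma weylCoeff_ne_zero_iff (hS : S.IsSymm) (b : V m) :
    weylCoeff S b ≠ 0 ↔ ∀ w, w ᵥ* S = 0 → twistedPhase S b w = 1 := by
  refine ⟨fun hb w hw => ?_, fun h hb => ?_⟩
  · have := weylCoeff_eq_mul_of_vecMul_eq_zero hS b hw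
    exact (mul_eq_right₀ hb).mp this.symm
  · have hnorm := weylCoeff_mul_conj hS b
    have hker : ∑ w : V m, (if w ᵥ* S = 0 then twistedPhase S b w else 0) =
        (Finset.univ.filter fun w : V m => w ᵥ* S = 0).card := by
      rw [← Finset.sum_boole]
      exact Finset.sum_congr rfl fun w _ => by split_ifs with hw <;> simp [h w, hw]
    have hcard : (Finset.univ.filter fun w : V m => w ᵥ* S = 0).card ≠ 0 :=
      Finset.card_ne_zero.mpr ⟨0, by simp⟩
    rw [hb, zero_mul, hker] at hnorm
    simp [hcard] at hnorm

lemma trace_conjTranspose_EM_mul_GU (a b : V m) :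
    trace ((EM (a, b))ᴴ * GU S) = if a = 0 then weylCoeff S b else 0 := by
  simp only [trace, diag_apply, mul_apply, conjTranspose_apply, GU, diagonal_apply, mul_ite,
    mul_zero, Finset.sum_ite_eq', Finset.mem_univ, if_true, EM, DM, Matrix.smul_apply,
    of_apply, smul_eq_mul]
  split_ifs with ha
  · subst ha
    refine Finset.sum_congr rfl fun v _ => ?_
    rw [twistedPhase, phase, ← natCast_dotN, signChar_natCast]
    simp [dotN]
  · refine Finset.sum_eq_zero fun v _ => ?_
    simp [ha]

lemma supp_GU :
    supp (GU S) = ({0} : Set (V m)) ×ˢ {b | weylCoeff S b ≠ 0} := by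
  ext ⟨a, b⟩
  by_cases ha : a = 0 <;> simp [supp, trace_conjTranspose_EM_mul_GU, ha]

lemma trace_GU : trace (GU S) = weylCoeff S 0 := by
  simp [GU, trace_diagonal, weylCoeff, twistedPhase, phase]

lemma phase_sq_of_vecMul_eq_zero (hS : S.IsSymm)
    {w : V m} (hw : w ᵥ* S = 0) : phase S w ^ 2 = 1 := by
  have := phase_add hS w w
  rwa [add_self_eq_zero_vec, phase_zero, hw, zero_dotProduct, signChar_zero, mul_one,
    eq_comm, ← sq] at this

lemma exists_phase_eq_signChar (hS : S.IsSymm) :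
    ∃ c : V m, ∀ w, w ᵥ* S = 0 → phase S w = signChar (c ⬝ᵥ w) := by
  set K := LinearMap.ker (vecMulLinear S)
  have hK (w : K) : (w : V m) ᵥ* S = 0 := LinearMap.mem_ker.mp w.2
  -- `τ` is the additive form of the `±1`-valued character `phase S` on `ker S`; any linear
  -- extension of it to `V m` is a dot product with some `c`.
  choose τ hτ using fun w : K => exists_signChar_eq (phase_sq_of_vecMul_eq_zero hS (hK w))
  let τHom : K →+ ZMod 2 :=
    { toFun := τ
      map_zero' := signChar_injective (by rw [hτ, signChar_zero]; exact phase_zero)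
      map_add' := fun u v => signChar_injective (by
        rw [hτ, signChar_add, hτ, hτ, Submodule.coe_add, phase_add hS, hK u, zero_dotProduct,
          signChar_zero, mul_one]) }
  obtain ⟨φ, hφ⟩ := LinearMap.exists_extend (τHom.toZModLinearMap 2)
  refine ⟨fun i => φ fun j => if i = j then 1 else 0, fun w hw => ?_⟩
  have hwK : w ∈ K := LinearMap.mem_ker.mpr hw
  have hφw : φ w = τ ⟨w, hwK⟩ := LinearMap.congr_fun hφ ⟨w, hwK⟩
  rw [← hτ ⟨w, hwK⟩, ← hφw, LinearMap.pi_apply_eq_sum_univ φ w, dotProduct]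
  simp only [smul_eq_mul, mul_comm]

lemma supp_GU_eq_of_phase_eq_signChar (hS : S.IsSymm)
    {c : V m} (hc : ∀ w, w ᵥ* S = 0 → phase S w = signChar (c ⬝ᵥ w)) :
    supp (GU S) = ({0} : Set (V m)) ×ˢ {b | ∃ w ∈ perp {w' : V m | w' ᵥ* S = 0}, b = c + w} := by
  have key (b w : V m) (hw : w ᵥ* S = 0) : twistedPhase S b w = 1 ↔ (b + c) ⬝ᵥ w = 0 := by
    rw [twistedPhase, hc w hw, ← signChar_add, ← add_dotProduct, signChar_eq_one_iff]
  rw [supp_GU]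
  congr 1
  ext b
  simp only [weylCoeff_ne_zero_iff hS]
  constructor
  · intro hb
    refine ⟨b + c, fun w hw => (key b w hw).mp (hb w hw), ?_⟩
    rw [add_comm b c, ← add_assoc, add_self_eq_zero_vec, zero_add]
  · rintro ⟨w', hw', rfl⟩ w hw
    rw [key _ w hw, add_right_comm, add_self_eq_zero_vec, zero_add]
    exact hw' w hw

end DiagonalClifford

open DiagonalClifford in
theorem stmt6_general {m : ℕ} (S : Matrix (Fin m) (Fin m) (ZMod 2))
    (hS : S.IsSymm) :
    (Matrix.trace (GU S) ≠ 0 →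
      supp (GU S) = ({(0 : V m)} : Set (V m)) ×ˢ perp {w : V m | Matrix.vecMul w S = 0}) ∧
    (Matrix.trace (GU S) = 0 → ∃ c : V m,
      supp (GU S) = ({(0 : V m)} : Set (V m)) ×ˢ
        {b : V m | ∃ w ∈ perp {w' : V m | Matrix.vecMul w' S = 0}, b = c + w}) := by
  refine ⟨fun htr => ?_, fun _ => ?_⟩
  · rw [trace_GU, weylCoeff_ne_zero_iff hS] at htr
    have hphase (w : V m) (hw : w ᵥ* S = 0) : phase S w = signChar (0 ⬝ᵥ w) := by
      simpa [twistedPhase] using htr w hw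
    rw [supp_GU_eq_of_phase_eq_signChar hS hphase]
    simp
  · obtain ⟨c, hc⟩ := exists_phase_eq_signChar hS
    exact ⟨c, supp_GU_eq_of_phase_eq_signChar hS hc⟩

/-- for symmetric binary `S` with `W = ker(S)`: if `Tr(G_U(S)) ≠ 0` then
`supp(G_U(S)) = {0} × W^⊥`; otherwise `supp(G_U(S)) = {0} × (c ⊕ W^⊥)` for some `c`. -/
theorem stmt6 {m : ℕ} (hm : 1 ≤ m) (S : Matrix (Fin m) (Fin m) (ZMod 2))
    (hS : S.IsSymm) :
    (Matrix.trace (GU S) ≠ 0 →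
      supp (GU S) = ({(0 : V m)} : Set (V m)) ×ˢ perp {w : V m | Matrix.vecMul w S = 0}) ∧
    (Matrix.trace (GU S) = 0 → ∃ c : V m,
      supp (GU S) = ({(0 : V m)} : Set (V m)) ×ˢ
        {b : V m | ∃ w ∈ perp {w' : V m | Matrix.vecMul w' S = 0}, b = c + w}) :=
  stmt6_general S hS
end
end
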